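/- arXiv:0911.2803 — 2 statements merged into one kernel-verified Lean document; each statement's English description precedes it below -/
import Mathlib

section
/- Let φ_σ(x) = exp(-|x/σ|²) on ℝ^d with σ > 0 fixed, and let B = B(0,R) be the ball of radius R centered at the origin. Then there exist constants C, c > 0 depending only on R, σ, d such that for all h with 0 < h < π/R, the quantity K_h := Σ_{β ∈ (2π/h)ℤ^d \ {0}} sup_{ξ ∈ B} φ̂_σ(ξ+β)/φ̂_σ(ξ) satisfies K_h ≤ C e^{-c/h²}. -/
open Real

/-- The lattice point of `ℤ^d` viewed inside Euclidean space `ℝ^d`. -/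
noncomputable def latticeVec (d : ℕ) (m : Fin d → ℤ) : EuclideanSpace ℝ (Fin d) :=
  (EuclideanSpace.equiv (Fin d) ℝ).symm (fun i => (m i : ℝ))

/-- The Fourier transform of the Gaussian `φ_σ(x) = exp(-|x/σ|²)`:
`φ̂_σ(ξ) = (σ√π)^d exp(-|σξ/2|²)`. -/
noncomputable def gaussianFT (d : ℕ) (σ : ℝ) (ξ : EuclideanSpace ℝ (Fin d)) : ℝ :=
  (σ * Real.sqrt π) ^ d * Real.exp (-‖(σ / 2) • ξ‖ ^ 2)

/-!
The ratio `φ̂_σ(ξ + β) / φ̂_σ(ξ)` is `exp ((σ/2)² (|ξ|² - |ξ + β|²))`. For `|ξ| ≤ R` and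
`β = (2π/h) m` with `m ≠ 0` we have `|β| ≥ 2π/h > 2R`, hence `|ξ + β| ≥ |β|/2` and the exponent is
at most `(σ/2)² (R² - (π/h)² |m|²)`. As `(π/h)² > R²` and `|m| ≥ 1`,
`(π/h)² |m|² ≥ (π/h)² + R² (|m|² - 1)`, which splits off the factor `exp (-(σπ/2)² / h²)` and
leaves the Gaussian `exp ((σR/2)² (2 - |m|²))`, summable over `ℤ^d` and independent of `h`.
-/

lemma summable_exp_neg_mul_sq_int {b : ℝ} (hb : 0 < b) :
    Summable fun n : ℤ => exp (-b * (n : ℝ) ^ 2) := by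
  have hnat : Summable fun n : ℕ => exp (-b * (n : ℝ) ^ 2) :=
    summable_exp_nat_mul_of_ge (neg_neg_of_pos hb) fun n => mod_cast Nat.le_self_pow two_ne_zero n
  exact .of_nat_of_neg (by simpa using hnat) (by simpa using hnat)

lemma summable_exp_neg_mul_sum_sq {b : ℝ} (hb : 0 < b) (d : ℕ) :
    Summable fun m : Fin d → ℤ => exp (-b * ∑ i, (m i : ℝ) ^ 2) := by
  induction d with
  | zero => exact .of_finite
  | succ n ih =>
    rw [← (Fin.consEquiv fun _ => ℤ).summable_iff]
    convert (summable_exp_neg_mul_sq_int hb).mul_of_nonneg ih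
      (fun _ => (exp_pos _).le) (fun _ => (exp_pos _).le) using 2 with p
    simp only [Function.comp_apply, Fin.consEquiv_apply, Fin.sum_univ_succ, Fin.cons_zero,
      Fin.cons_succ, mul_add, exp_add]

lemma norm_latticeVec_sq (d : ℕ) (m : Fin d → ℤ) :
    ‖latticeVec d m‖ ^ 2 = ∑ i, (m i : ℝ) ^ 2 := by
  rw [EuclideanSpace.norm_eq, sq_sqrt (by positivity)]
  simp [latticeVec, sq_abs]

lemma one_le_norm_latticeVec {d : ℕ} {m : Fin d → ℤ} (hm : m ≠ 0) :
    1 ≤ ‖latticeVec d m‖ := by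
  obtain ⟨i, hi⟩ := Function.ne_iff.mp hm
  calc (1 : ℝ) ≤ |(m i : ℝ)| := mod_cast Int.one_le_abs hi
    _ = ‖latticeVec d m i‖ := by simp [latticeVec]
    _ ≤ ‖latticeVec d m‖ := PiLp.norm_apply_le _ i

lemma gaussianFT_add_div_gaussianFT {d : ℕ} {σ : ℝ} (hσ : σ ≠ 0)
    (ξ w : EuclideanSpace ℝ (Fin d)) :
    gaussianFT d σ (ξ + w) / gaussianFT d σ ξ =
      exp ((σ / 2) ^ 2 * (‖ξ‖ ^ 2 - ‖ξ + w‖ ^ 2)) := by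
  have hA : (σ * sqrt π) ^ d ≠ 0 := pow_ne_zero _ (mul_ne_zero hσ (sqrt_pos.2 pi_pos).ne')
  rw [gaussianFT, gaussianFT, mul_div_mul_left _ _ hA, ← exp_sub, norm_smul, norm_smul,
    mul_pow, mul_pow, Real.norm_eq_abs, sq_abs]
  ring_nf

lemma norm_sq_sub_norm_add_sq_le {E : Type*} [SeminormedAddCommGroup E] {ξ w : E} {R : ℝ}
    (hξ : ‖ξ‖ ≤ R) (hw : 2 * R ≤ ‖w‖) :
    ‖ξ‖ ^ 2 - ‖ξ + w‖ ^ 2 ≤ R ^ 2 - ‖w‖ ^ 2 / 4 := by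
  have hξw : ‖w‖ / 2 ≤ ‖ξ + w‖ := by
    have := norm_sub_norm_le w (-ξ)
    rw [norm_neg, sub_neg_eq_add, add_comm] at this
    linarith
  nlinarith [norm_nonneg ξ]

lemma gaussianFT_shift_div_le {d : ℕ} {σ R h : ℝ} (hσ : σ ≠ 0) (hh : 0 < h)
    (hhR : h < π / R) {ξ : EuclideanSpace ℝ (Fin d)} (hξ : ‖ξ‖ ≤ R) {m : Fin d → ℤ}
    (hm : m ≠ 0) :
    gaussianFT d σ (ξ + (2 * π / h) • latticeVec d m) / gaussianFT d σ ξ ≤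
      exp ((σ * R / 2) ^ 2 * (2 - ‖latticeVec d m‖ ^ 2)) *
        exp (-(σ * π / 2) ^ 2 / h ^ 2) := by
  set s := ‖latticeVec d m‖
  have hs : 1 ≤ s := one_le_norm_latticeVec hm
  have hR0 : 0 < R := (div_pos_iff_of_pos_left pi_pos).mp (hh.trans hhR)
  have hR : R < π / h := by rwa [lt_div_iff₀ hh, mul_comm, ← lt_div_iff₀ hR0]
  have hw : ‖(2 * π / h) • latticeVec d m‖ = 2 * (π / h) * s := by
    rw [norm_smul, Real.norm_of_nonneg (by positivity)]; ring
  have key := norm_sq_sub_norm_add_sq_le hξ (w := (2 * π / h) • latticeVec d m) (by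
    rw [hw]; nlinarith)
  rw [hw] at key
  rw [gaussianFT_add_div_gaussianFT hσ, ← exp_add, exp_le_exp]
  have hgap : 0 ≤ ((π / h) ^ 2 - R ^ 2) * (s ^ 2 - 1) := by
    apply mul_nonneg <;> nlinarith
  calc (σ / 2) ^ 2 * (‖ξ‖ ^ 2 - ‖ξ + (2 * π / h) • latticeVec d m‖ ^ 2)
      ≤ (σ / 2) ^ 2 * (R ^ 2 - (2 * (π / h) * s) ^ 2 / 4) := by gcongr
    _ ≤ (σ / 2) ^ 2 * (2 * R ^ 2 - R ^ 2 * s ^ 2 - (π / h) ^ 2) :=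
        mul_le_mul_of_nonneg_left (by linarith) (sq_nonneg _)
    _ = (σ * R / 2) ^ 2 * (2 - s ^ 2) + -(σ * π / 2) ^ 2 / h ^ 2 := by ring

/-- For `0 < h < π/R`, the quantity
`K_h = Σ_{β ∈ (2π/h)ℤ^d \ {0}} sup_{ξ ∈ B(0,R)} φ̂_σ(ξ+β)/φ̂_σ(ξ)`
satisfies `K_h ≤ C e^{-c/h²}`, with `C, c > 0` depending only on `R, σ, d`. -/
theorem gaussian_lattice_tail_bound (d : ℕ) (σ R : ℝ) (hσ : 0 < σ) (hR : 0 < R) :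
    ∃ C c : ℝ, 0 < C ∧ 0 < c ∧ ∀ h : ℝ, 0 < h → h < π / R →
      (∑' β : {m : Fin d → ℤ // m ≠ 0},
          ⨆ ξ : Metric.closedBall (0 : EuclideanSpace ℝ (Fin d)) R,
            gaussianFT d σ ((ξ : EuclideanSpace ℝ (Fin d)) +
                (2 * π / h) • latticeVec d (β : Fin d → ℤ)) /
              gaussianFT d σ ξ)
        ≤ C * Real.exp (-c / h ^ 2) := by
  set a := (σ * R / 2) ^ 2
  set g : (Fin d → ℤ) → ℝ := fun m => exp (a * (2 - ‖latticeVec d m‖ ^ 2))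
  have hg : Summable g := by
    refine ((summable_exp_neg_mul_sum_sq (by positivity : 0 < a) d).mul_left (exp (2 * a))).congr
      fun m => ?_
    simp only [g, norm_latticeVec_sq, ← exp_add]
    ring_nf
  have hg0 : ∀ m, 0 ≤ g m := fun _ => (exp_pos _).le
  have : Nonempty (Metric.closedBall (0 : EuclideanSpace ℝ (Fin d)) R) :=
    (Metric.nonempty_closedBall.mpr hR.le).to_subtype
  refine ⟨∑' m, g m, (σ * π / 2) ^ 2, hg.tsum_pos hg0 0 (exp_pos _), by positivity,
    fun h hh hhR => ?_⟩
  have hsum := (hg.subtype {m | m ≠ 0}).mul_right (exp (-(σ * π / 2) ^ 2 / h ^ 2))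
  have hbound (β : {m : Fin d → ℤ // m ≠ 0}) :=
    ciSup_le fun ξ : Metric.closedBall (0 : EuclideanSpace ℝ (Fin d)) R =>
      gaussianFT_shift_div_le hσ.ne' hh hhR (mem_closedBall_zero_iff.mp ξ.2) β.2
  have hterm_nonneg (β : {m : Fin d → ℤ // m ≠ 0}) :=
    Real.iSup_nonneg fun ξ : Metric.closedBall (0 : EuclideanSpace ℝ (Fin d)) R =>
      (gaussianFT_add_div_gaussianFT hσ.ne' ξ ((2 * π / h) • latticeVec d β)).symm ▸
        (exp_pos _).le
  calc _ ≤ ∑' β : {m : Fin d → ℤ // m ≠ 0}, g β * exp (-(σ * π / 2) ^ 2 / h ^ 2) :=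
        (hsum.of_nonneg_of_le hterm_nonneg hbound).tsum_le_tsum hbound hsum
    _ = (∑' β : {m : Fin d → ℤ // m ≠ 0}, g β) * exp (-(σ * π / 2) ^ 2 / h ^ 2) :=
        tsum_mul_right
    _ ≤ _ := by gcongr; exact hg.tsum_subtype_le g {m | m ≠ 0} hg0
end

section
/- Let 1/τ = s/d with s ≥ 0, 0 < q ≤ min(τ,1), and let (ψ_I)_{I∈D} be functions satisfying |ψ_I(x)|^{τ'} ≤ C(1+|x-c(I)|/ℓ(I))^{-(d+1)} for the conjugate exponent τ' of τ > 1. If (f_I)_{I∈D} satisfies |f|_{B^s_{τ,q}} := (Σ_{j∈ℤ}(Σ_{I∈D_j}|f_I|^τ)^{q/τ})^{1/q} < ∞, then Σ_{j∈ℤ} Σ_{I∈D_j} |f_I||ψ_I(x)| ≤ C' |f|_{B^s_{τ,q}} for all x, where C' depends only on C, d, τ, q; in particular the series Σ_I f_I ψ_I converges absolutely and uniformly. -/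
open scoped ENNReal

/-- The Besov seminorm `|f|_{B^s_{τ,q}} = (Σ_j (Σ_{I∈D_j}|f_I|^τ)^{q/τ})^{1/q}`. -/
noncomputable def besovNorm (d : ℕ) (τ q : ℝ) (f : ℤ × (Fin d → ℤ) → ℂ) : ℝ≥0∞ :=
  (∑' j : ℤ, ((∑' m : Fin d → ℤ, ENNReal.ofReal ‖f (j, m)‖ ^ τ) ^ (1 / τ)) ^ q) ^ (1 / q)

@[simp]
theorem latticeVec_apply (d : ℕ) (m : Fin d → ℤ) (i : Fin d) : latticeVec d m i = m i := rfl

namespace ENNReal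

theorem rpow_sum_le_sum_rpow {ι : Type*} (s : Finset ι) (a : ι → ℝ≥0∞) {p : ℝ} (hp0 : 0 < p)
    (hp1 : p ≤ 1) : (∑ i ∈ s, a i) ^ p ≤ ∑ i ∈ s, a i ^ p := by
  induction s using Finset.cons_induction with
  | empty => simp [ENNReal.zero_rpow_of_pos hp0]
  | cons i s _ ih =>
    rw [Finset.sum_cons, Finset.sum_cons]
    exact (rpow_add_le_add_rpow _ _ hp0.le hp1).trans (by gcongr)

theorem tsum_le_rpow_tsum_rpow {ι : Type*} (a : ι → ℝ≥0∞) {p : ℝ} (hp0 : 0 < p) (hp1 : p ≤ 1) :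
    ∑' i, a i ≤ (∑' i, a i ^ p) ^ (1 / p) := by
  rw [ENNReal.tsum_eq_iSup_sum]
  refine iSup_le fun s => ?_
  rw [one_div, ENNReal.le_rpow_inv_iff hp0]
  exact (rpow_sum_le_sum_rpow s a hp0 hp1).trans (ENNReal.sum_le_tsum s)

theorem inner_le_Lp_mul_Lq_tsum {ι : Type*} (f g : ι → ℝ≥0∞) {p q : ℝ}
    (hpq : p.HolderConjugate q) :
    ∑' i, f i * g i ≤ (∑' i, f i ^ p) ^ (1 / p) * (∑' i, g i ^ q) ^ (1 / q) := by
  rw [ENNReal.tsum_eq_iSup_sum]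
  exact iSup_le fun s => (inner_le_Lp_mul_Lq s f g hpq).trans <|
    mul_le_mul' (rpow_le_rpow (ENNReal.sum_le_tsum s) hpq.one_div_nonneg)
      (rpow_le_rpow (ENNReal.sum_le_tsum s) hpq.symm.one_div_nonneg)

theorem tsum_prod_mul_le_of_tsum_rpow_le {ι κ : Type*} (a b : ι × κ → ℝ≥0∞) {p p' r : ℝ}
    (hpp' : p.HolderConjugate p') (hr0 : 0 < r) (hr1 : r ≤ 1) {A : ℝ≥0∞}
    (hb : ∀ j, ∑' m, b (j, m) ^ p' ≤ A) :
    ∑' I, a I * b I ≤ A ^ (1 / p') * (∑' j, ((∑' m, a (j, m) ^ p) ^ (1 / p)) ^ r) ^ (1 / r) :=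
  calc ∑' I, a I * b I = ∑' (j) (m), a (j, m) * b (j, m) := ENNReal.tsum_prod'
    _ ≤ ∑' j, (∑' m, a (j, m) ^ p) ^ (1 / p) * A ^ (1 / p') := by
      refine ENNReal.tsum_le_tsum fun j => (inner_le_Lp_mul_Lq_tsum _ _ hpp').trans ?_
      gcongr
      · exact hpp'.symm.one_div_nonneg
      · exact hb j
    _ = A ^ (1 / p') * ∑' j, (∑' m, a (j, m) ^ p) ^ (1 / p) := by
      rw [ENNReal.tsum_mul_right, mul_comm]
    _ ≤ _ := by
      gcongr
      exact tsum_le_rpow_tsum_rpow _ hr0 hr1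

theorem tsum_pi_prod_eq_prod_tsum {κ : Type*} : ∀ (d : ℕ) (g : Fin d → κ → ℝ≥0∞),
    ∑' m : Fin d → κ, ∏ i, g i (m i) = ∏ i, ∑' k, g i k
  | 0, g => by simp
  | d + 1, g => by
    rw [← (Fin.consEquiv fun _ => κ).tsum_eq, ENNReal.tsum_prod', Fin.prod_univ_succ,
      ← tsum_pi_prod_eq_prod_tsum d, ← ENNReal.tsum_mul_right]
    simp [Fin.prod_univ_succ, ENNReal.tsum_mul_left]

end ENNReal

/-- After shifting `k` by `⌊t⌋`, the summand is dominated by `max 1 |k| ^ (-p)`, uniformly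
in `t`. -/
theorem exists_tsum_ofReal_one_add_abs_sub_intCast_rpow_le {p : ℝ} (hp : 1 < p) :
    ∃ B : ℝ≥0∞, B ≠ ∞ ∧ ∀ t : ℝ, ∑' k : ℤ, ENNReal.ofReal ((1 + |t - k|) ^ (-p)) ≤ B := by
  set g : ℤ → ℝ := fun k => max 1 |(k : ℝ)| ^ (-p)
  have hg : Summable g := by
    refine (Real.summable_abs_int_rpow hp).of_norm_bounded_eventually ?_
    filter_upwards [(Set.finite_singleton (0 : ℤ)).compl_mem_cofinite] with k hk
    have hk1 : (1 : ℝ) ≤ |(k : ℝ)| := by exact_mod_cast Int.one_le_abs hk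
    simp [g, max_eq_right hk1, abs_of_nonneg (Real.rpow_nonneg (abs_nonneg _) _)]
  refine ⟨∑' k, ENNReal.ofReal (g k), hg.tsum_ofReal_ne_top, fun t => ?_⟩
  rw [← (Equiv.addRight ⌊t⌋).tsum_eq]
  refine ENNReal.tsum_le_tsum fun k => ENNReal.ofReal_le_ofReal ?_
  have hshift : t - ((k + ⌊t⌋ : ℤ) : ℝ) = Int.fract t - k := by
    rw [Int.fract]; push_cast; ring
  have hfract := Int.fract_lt_one t
  have hle : max 1 |(k : ℝ)| ≤ 1 + |Int.fract t - k| := by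
    refine max_le (by linarith [abs_nonneg (Int.fract t - k)]) ?_
    cases abs_cases (k : ℝ) <;> cases abs_cases (Int.fract t - k) <;>
      linarith [Int.fract_nonneg t]
  simp only [Equiv.coe_addRight, hshift, g]
  exact Real.rpow_le_rpow_of_nonpos (by positivity) hle (by linarith)

theorem EuclideanSpace.rpow_neg_one_add_norm_le_prod {ι : Type*} [Fintype ι] [Nonempty ι]
    (v : EuclideanSpace ℝ ι) {r : ℝ} (hr : 0 ≤ r) :
    (1 + ‖v‖) ^ (-r) ≤ ∏ i, (1 + |v i|) ^ (-(r / Fintype.card ι)) := by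
  have hcard : (Fintype.card ι : ℝ) ≠ 0 := by positivity
  calc (1 + ‖v‖) ^ (-r) = ∏ _i : ι, (1 + ‖v‖) ^ (-(r / Fintype.card ι)) := by
        rw [Finset.prod_const, Finset.card_univ, ← Real.rpow_natCast,
          ← Real.rpow_mul (by positivity)]
        field_simp
    _ ≤ ∏ i, (1 + |v i|) ^ (-(r / Fintype.card ι)) := by
        refine Finset.prod_le_prod (fun _ _ => by positivity) fun i _ => ?_
        refine Real.rpow_le_rpow_of_nonpos (by positivity) ?_ (neg_nonpos.2 (by positivity))
        simpa using PiLp.norm_apply_le v i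

theorem exists_tsum_ofReal_one_add_norm_sub_latticeVec_rpow_le {d : ℕ} (hd : 0 < d) {r : ℝ}
    (hr : d < r) : ∃ K : ℝ≥0∞, K ≠ ∞ ∧ ∀ y : EuclideanSpace ℝ (Fin d),
      ∑' m, ENNReal.ofReal ((1 + ‖y - latticeVec d m‖) ^ (-r)) ≤ K := by
  have : Nonempty (Fin d) := ⟨⟨0, hd⟩⟩
  obtain ⟨B, hB, hBle⟩ :=
    exists_tsum_ofReal_one_add_abs_sub_intCast_rpow_le ((one_lt_div (by positivity)).2 hr)
  refine ⟨B ^ d, ENNReal.pow_ne_top hB, fun y => ?_⟩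
  calc ∑' m, ENNReal.ofReal ((1 + ‖y - latticeVec d m‖) ^ (-r))
      ≤ ∑' m : Fin d → ℤ, ∏ i, ENNReal.ofReal ((1 + |y i - m i|) ^ (-(r / d))) := by
        refine ENNReal.tsum_le_tsum fun m => ?_
        rw [← ENNReal.ofReal_prod_of_nonneg fun _ _ => by positivity]
        refine ENNReal.ofReal_le_ofReal ?_
        simpa using EuclideanSpace.rpow_neg_one_add_norm_le_prod (y - latticeVec d m)
          (hr.le.trans' (by positivity))
    _ = ∏ i, ∑' k : ℤ, ENNReal.ofReal ((1 + |y i - k|) ^ (-(r / d))) :=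
        ENNReal.tsum_pi_prod_eq_prod_tsum d fun i (k : ℤ) =>
          ENNReal.ofReal ((1 + |y i - k|) ^ (-(r / d)))
    _ ≤ B ^ d := (Finset.prod_le_prod' fun i _ => hBle (y i)).trans_eq (by simp)

theorem norm_sub_smul_div_eq {E : Type*} [SeminormedAddCommGroup E] [NormedSpace ℝ E] {c : ℝ}
    (hc : 0 < c) (x v : E) : ‖x - c • v‖ / c = ‖c⁻¹ • x - v‖ := by
  rw [← inv_smul_smul₀ hc.ne' v, smul_inv_smul₀ hc.ne', ← smul_sub, norm_smul, Real.norm_eq_abs,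
    abs_inv, abs_of_pos hc, div_eq_inv_mul]

theorem besov_embedding_Linfty_general (d : ℕ) (hd : 1 ≤ d) (τ q : ℝ)
    (hτ1 : 1 < τ) (hq0 : 0 < q) (hq : q ≤ min τ 1) (C : ℝ) :
    ∃ C' : ℝ≥0∞, C' ≠ ∞ ∧
      ∀ (ψ : ℤ × (Fin d → ℤ) → EuclideanSpace ℝ (Fin d) → ℂ)
        (f : ℤ × (Fin d → ℤ) → ℂ),
        (∀ (I : ℤ × (Fin d → ℤ)) (x : EuclideanSpace ℝ (Fin d)),
          ‖ψ I x‖ ^ (τ / (τ - 1)) ≤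
            C * (1 + ‖x - (2:ℝ) ^ I.1 • latticeVec d I.2‖ / (2:ℝ) ^ I.1) ^ (-((d:ℝ) + 1))) →
        besovNorm d τ q f ≠ ∞ →
        ∀ x : EuclideanSpace ℝ (Fin d),
          (∑' I : ℤ × (Fin d → ℤ), ENNReal.ofReal (‖f I‖ * ‖ψ I x‖))
            ≤ C' * besovNorm d τ q f := by
  have hτ' : τ.HolderConjugate (τ / (τ - 1)) := .conjExponent hτ1
  obtain ⟨K, hK, hKle⟩ :=
    exists_tsum_ofReal_one_add_norm_sub_latticeVec_rpow_le hd (r := d + 1) (lt_add_one _)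
  refine ⟨(ENNReal.ofReal C * K) ^ (1 / (τ / (τ - 1))),
    ENNReal.rpow_ne_top_of_nonneg hτ'.symm.one_div_nonneg (by finiteness), ?_⟩
  intro ψ f hψ _ x
  have hlevel : ∀ j, ∑' m, ENNReal.ofReal ‖ψ (j, m) x‖ ^ (τ / (τ - 1)) ≤ ENNReal.ofReal C * K :=
    fun j => calc
      _ ≤ ∑' m, ENNReal.ofReal C *
            ENNReal.ofReal ((1 + ‖((2:ℝ) ^ j)⁻¹ • x - latticeVec d m‖) ^ (-((d:ℝ) + 1))) := by
        refine ENNReal.tsum_le_tsum fun m => ?_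
        rw [ENNReal.ofReal_rpow_of_nonneg (norm_nonneg _) hτ'.symm.nonneg,
          ← ENNReal.ofReal_mul' (by positivity), ← norm_sub_smul_div_eq (by positivity)]
        exact ENNReal.ofReal_le_ofReal (hψ (j, m) x)
      _ ≤ ENNReal.ofReal C * K := by
        rw [ENNReal.tsum_mul_left]
        gcongr
        exact hKle _
  simp_rw [ENNReal.ofReal_mul (norm_nonneg _)]
  exact ENNReal.tsum_prod_mul_le_of_tsum_rpow_le _ _ hτ' hq0 (hq.trans (min_le_right _ _)) hlevel

/-- Besov embedding `B^{d/τ}_{τ,q} ↪ L^∞`: if the wavelets `ψ_I` satisfy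
`|ψ_I(x)|^{τ'} ≤ C(1+|x-c(I)|/ℓ(I))^{-(d+1)}` (with `τ'` the conjugate of `τ > 1`) and
`|f|_{B^s_{τ,q}} < ∞` with `1/τ = s/d`, `0 < q ≤ min(τ,1)`, then
`Σ_j Σ_{I∈D_j} |f_I||ψ_I(x)| ≤ C' |f|_{B^s_{τ,q}}` for all `x`, with `C'` depending only on
`C, d, τ, q`; in particular the series converges absolutely. -/
theorem besov_embedding_Linfty (d : ℕ) (hd : 1 ≤ d) (s τ q : ℝ) (hs : 0 ≤ s)
    (hτ1 : 1 < τ) (hτ : 1 / τ = s / d) (hq0 : 0 < q) (hq : q ≤ min τ 1) (C : ℝ) :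
    ∃ C' : ℝ≥0∞, C' ≠ ∞ ∧
      ∀ (ψ : ℤ × (Fin d → ℤ) → EuclideanSpace ℝ (Fin d) → ℂ)
        (f : ℤ × (Fin d → ℤ) → ℂ),
        (∀ (I : ℤ × (Fin d → ℤ)) (x : EuclideanSpace ℝ (Fin d)),
          ‖ψ I x‖ ^ (τ / (τ - 1)) ≤
            C * (1 + ‖x - (2:ℝ) ^ I.1 • latticeVec d I.2‖ / (2:ℝ) ^ I.1) ^ (-((d:ℝ) + 1))) →
        besovNorm d τ q f ≠ ∞ →
        ∀ x : EuclideanSpace ℝ (Fin d),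
          (∑' I : ℤ × (Fin d → ℤ), ENNReal.ofReal (‖f I‖ * ‖ψ I x‖))
            ≤ C' * besovNorm d τ q f :=
  besov_embedding_Linfty_general d hd τ q hτ1 hq0 hq C
end
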